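/- Let ζ₀,…,ζ_{k-1} be the (distinct) complex roots of A(x) = x^k - x^{k-1} - ... - 1, and let F_k(n) satisfy F_k(n) = F_k(n-1)+...+F_k(n-k) with F_k(0)=...=F_k(k-2)=0, F_k(k-1)=1. Then for all n ≥ 0, F_k(n) = ∑_{j=0}^{k-1} ((ζ_j - 1)/((k+1)ζ_j - 2k)) · ζ_j^{n-k+1}. -/

import Mathlib

/-!
Since the `k` distinct `ζ j` are roots of the monic degree-`k` polynomial
`A = kbonacciPoly ℂ k`, we have `A = ∏ j, (X - ζ j)`. Lagrange interpolation of `X ^ n` for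
`n < k` then gives `∑ j, ζ j ^ n / A'(ζ j) = [n = k - 1]`, the initial values of `F`; as every
`n ↦ ζ j ^ n` obeys the recurrence, `F n = ∑ j, ζ j ^ n / A'(ζ j)` for all `n`. Differentiating
`(X - 1) * A = X ^ (k + 1) - 2 * X ^ k + 1` at a root gives
`(ζ - 1) * A'(ζ) = ζ ^ (k - 1) * ((k + 1) * ζ - 2 * k)`, which rewrites this in the stated form.
-/

open Finset Polynomial

noncomputable def kbonacciPoly (R : Type*) [CommRing R] (k : ℕ) : R[X] :=
  X ^ k - ∑ i ∈ range k, X ^ i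

section Recurrence

variable {k : ℕ}

theorem eq_of_sum_range_rec_of_eq_init {M : Type*} [AddCommMonoid M] {f g : ℕ → M}
    (hf : ∀ n, k ≤ n → f n = ∑ j ∈ range k, f (n - (j + 1)))
    (hg : ∀ n, k ≤ n → g n = ∑ j ∈ range k, g (n - (j + 1)))
    (hinit : ∀ n < k, f n = g n) : f = g := by
  funext n
  induction n using Nat.strong_induction_on with
  | _ n ih =>
    rcases lt_or_ge n k with hn | hn
    · exact hinit n hn
    · rw [hf n hn, hg n hn]
      exact sum_congr rfl fun j hj => ih _ (by have := mem_range.1 hj; omega)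

theorem pow_eq_sum_range_pow_sub {R : Type*} [Semiring R] {z : R}
    (hz : z ^ k = ∑ i ∈ range k, z ^ i) {n : ℕ} (hn : k ≤ n) :
    z ^ n = ∑ j ∈ range k, z ^ (n - (j + 1)) :=
  calc z ^ n = z ^ (n - k) * z ^ k := by rw [← pow_add, Nat.sub_add_cancel hn]
    _ = ∑ i ∈ range k, z ^ (n - k + i) := by simp only [hz, mul_sum, pow_add]
    _ = ∑ j ∈ range k, z ^ (n - k + (k - 1 - j)) := (sum_range_reflect _ k).symm
    _ = ∑ j ∈ range k, z ^ (n - (j + 1)) :=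
      sum_congr rfl fun j hj => by have := mem_range.1 hj; congr 1; omega

theorem ne_zero_of_pow_eq_sum_range_pow {R : Type*} [Semiring R] [Nontrivial R] {z : R}
    (hk : k ≠ 0) (hz : z ^ k = ∑ i ∈ range k, z ^ i) : z ≠ 0 := by
  rintro rfl
  simp [zero_pow hk, hk] at hz

theorem ne_one_of_pow_eq_sum_range_pow {R : Type*} [Semiring R] [CharZero R] {z : R}
    (hk : 2 ≤ k) (hz : z ^ k = ∑ i ∈ range k, z ^ i) : z ≠ 1 := by
  rintro rfl
  have : ((1 : ℕ) : R) = k := by simpa using hz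
  exact absurd (Nat.cast_injective this) (by omega)

end Recurrence

section Polynomial

variable {K : Type*} [Field K] {k : ℕ}

theorem isRoot_kbonacciPoly_iff {z : K} :
    (kbonacciPoly K k).IsRoot z ↔ z ^ k = ∑ i ∈ range k, z ^ i := by
  simp [kbonacciPoly, eval_finsetSum, sub_eq_zero]

theorem degree_sum_range_X_pow_lt : (∑ i ∈ range k, (X : K[X]) ^ i).degree < k :=
  mem_degreeLT.1 <| Submodule.sum_mem _ fun i hi =>
    mem_degreeLT.2 <| by rw [degree_X_pow]; exact_mod_cast mem_range.1 hi

theorem kbonacciPoly_monic : (kbonacciPoly K k).Monic :=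
  (monic_X_pow k).sub_of_left <| by rw [degree_X_pow]; exact degree_sum_range_X_pow_lt

theorem degree_kbonacciPoly : (kbonacciPoly K k).degree = k := by
  rw [kbonacciPoly, degree_sub_eq_left_of_degree_lt, degree_X_pow]
  rw [degree_X_pow]; exact degree_sum_range_X_pow_lt

theorem kbonacciPoly_eq_nodal {ζ : Fin k → K} (hinj : Function.Injective ζ)
    (hroot : ∀ j, ζ j ^ k = ∑ i ∈ range k, ζ j ^ i) :
    kbonacciPoly K k = Lagrange.nodal univ ζ := by
  refine eq_of_degree_le_of_eval_index_eq univ hinj.injOn ?_ ?_ ?_ fun j _ => ?_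
  · simp [degree_kbonacciPoly]
  · simp [degree_kbonacciPoly, Lagrange.degree_nodal]
  · rw [kbonacciPoly_monic.leadingCoeff, Lagrange.nodal_monic.leadingCoeff]
  · rw [Lagrange.eval_nodal_at_node (mem_univ j)]
    exact isRoot_kbonacciPoly_iff.2 (hroot j)

theorem X_sub_one_mul_kbonacciPoly :
    (X - 1) * kbonacciPoly K k = X ^ (k + 1) - 2 * X ^ k + 1 := by
  rw [kbonacciPoly, mul_sub, mul_geom_sum, pow_succ]
  ring

theorem sub_one_mul_eval_derivative_kbonacciPoly (hk : k ≠ 0) {z : K}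
    (hz : z ^ k = ∑ i ∈ range k, z ^ i) :
    (z - 1) * (derivative (kbonacciPoly K k)).eval z = z ^ (k - 1) * ((k + 1) * z - 2 * k) := by
  have h := congrArg (fun p => (derivative p).eval z)
    (X_sub_one_mul_kbonacciPoly (K := K) (k := k))
  simp only [derivative_mul, derivative_sub, derivative_add, derivative_X, derivative_one,
    derivative_X_pow, derivative_ofNat, eval_add, eval_sub, eval_mul, eval_one, eval_X, eval_pow,
    eval_C, eval_ofNat, sub_zero, one_mul, zero_mul, add_zero, Nat.cast_add,
    Nat.cast_one, Nat.add_sub_cancel, (isRoot_kbonacciPoly_iff.2 hz).eq_zero, zero_add] at h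
  have hpow : z ^ k = z ^ (k - 1) * z := by rw [← pow_succ, Nat.sub_add_cancel (by omega)]
  rw [h, hpow]
  ring

theorem sub_one_div_eq_pow_div_eval_derivative (hk : k ≠ 0) {z : K}
    (hz : z ^ k = ∑ i ∈ range k, z ^ i) (h1 : z ≠ 1)
    (hd : (derivative (kbonacciPoly K k)).eval z ≠ 0) :
    (z - 1) / ((k + 1) * z - 2 * k) = z ^ (k - 1) / (derivative (kbonacciPoly K k)).eval z := by
  have key := sub_one_mul_eval_derivative_kbonacciPoly hk hz
  have hden : (k + 1) * z - 2 * k ≠ 0 := by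
    intro h
    rw [h, mul_zero] at key
    exact mul_ne_zero (sub_ne_zero.2 h1) hd key
  exact (div_eq_div_iff hden hd).2 key

end Polynomial

theorem eq_sum_pow_div_prod_sub_of_rec {K : Type*} [Field K] {k : ℕ} {ζ : Fin k → K}
    (hinj : Function.Injective ζ) (hroot : ∀ j, ζ j ^ k = ∑ i ∈ range k, ζ j ^ i) {F : ℕ → K}
    (h0 : ∀ n < k - 1, F n = 0) (h1 : F (k - 1) = 1)
    (hrec : ∀ n, k ≤ n → F n = ∑ j ∈ range k, F (n - (j + 1))) :
    F = fun n => ∑ j, ζ j ^ n / ∏ i ∈ univ.erase j, (ζ j - ζ i) := by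
  refine eq_of_sum_range_rec_of_eq_init hrec (fun n hn => ?_) fun n hn => ?_
  · rw [sum_comm]
    exact sum_congr rfl fun j _ => by rw [← sum_div, ← pow_eq_sum_range_pow_sub (hroot j) hn]
  · have hdeg : ((X : K[X]) ^ n).degree < #(univ : Finset (Fin k)) := by
      rw [degree_X_pow, card_univ, Fintype.card_fin]; exact_mod_cast hn
    have hcoeff := Lagrange.coeff_eq_sum hinj.injOn hdeg
    simp only [coeff_X_pow, card_univ, Fintype.card_fin, eval_pow, eval_X] at hcoeff
    rw [← hcoeff]
    split_ifs with h
    · rw [← h, h1]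
    · exact h0 n (by omega)

theorem stmt_11 (k : ℕ) (hk : 2 ≤ k) (ζ : Fin k → ℂ)
    (hroot : ∀ j, (ζ j) ^ k = ∑ i ∈ range k, (ζ j) ^ i)
    (hinj : Function.Injective ζ)
    (F : ℕ → ℂ)
    (h0 : ∀ n < k - 1, F n = 0) (h1 : F (k - 1) = 1)
    (hrec : ∀ n, k ≤ n → F n = ∑ j ∈ range k, F (n - (j + 1))) :
    ∀ n : ℕ, F n = ∑ j : Fin k,
      ((ζ j - 1) / ((k + 1) * ζ j - 2 * k)) * (ζ j) ^ ((n : ℤ) - k + 1) := by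
  intro n
  rw [eq_sum_pow_div_prod_sub_of_rec hinj hroot h0 h1 hrec]
  refine sum_congr rfl fun j _ => ?_
  have hderiv :
      (derivative (kbonacciPoly ℂ k)).eval (ζ j) = ∏ i ∈ univ.erase j, (ζ j - ζ i) := by
    rw [kbonacciPoly_eq_nodal hinj hroot, Lagrange.eval_nodal_derivative_eval_node_eq (mem_univ j),
      Lagrange.eval_nodal]
  have hderiv_ne : (derivative (kbonacciPoly ℂ k)).eval (ζ j) ≠ 0 := by
    rw [hderiv, prod_ne_zero_iff]
    exact fun i hi => sub_ne_zero.2 (hinj.ne (ne_of_mem_erase hi).symm)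
  rw [sub_one_div_eq_pow_div_eval_derivative (by omega) (hroot j)
    (ne_one_of_pow_eq_sum_range_pow hk (hroot j)) hderiv_ne, hderiv, div_mul_eq_mul_div,
    ← zpow_natCast, ← zpow_natCast,
    ← zpow_add₀ (ne_zero_of_pow_eq_sum_range_pow (by omega) (hroot j))]
  congr 2
  push_cast [Nat.cast_sub (by omega : 1 ≤ k)]
  ring
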